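/- arXiv:2410.15301 — 3 statements merged into one kernel-verified Lean document; each statement's English description precedes it below -/
import Mathlib

section
/- Define M(k) = [[0,-1],[1,k]] for integers k, and let P(n,s) = M(2)^{n-1} · M(3) · M(2)^{s+1} · M(1) for integers n ≥ 1 and s ≥ -1. Then P(n,s) = [[-(n·s+3n-1), -n],[(n+1)·s+3n+2, n+1]]. -/
/-- The matrix associated to a curve of self-intersection `-k`. -/
def chainMat (k : ℤ) : Matrix (Fin 2) (Fin 2) ℤ := !![0, -1; 1, k]

lemma chainMat_two_pow (m : ℕ) :
    chainMat 2 ^ m = !![1 - (m : ℤ), -(m : ℤ); (m : ℤ), (m : ℤ) + 1] := by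
  induction m with
  | zero => simp [Matrix.one_fin_two]
  | succ k ih =>
    rw [pow_succ, ih, chainMat]
    push_cast
    ext i j
    fin_cases i <;> fin_cases j <;>
      simp [Matrix.mul_apply, Fin.sum_univ_succ] <;> ring

/-- Closed form for the matrix of a chain of `n-1` curves of self-intersection
`-2`, one of self-intersection `-3`, then `s+1` curves of self-intersection
`-2`, then one of self-intersection `-1`. -/
theorem chain_matrix_An_classification (n : ℕ) (s : ℤ) (hn : 1 ≤ n) (hs : -1 ≤ s) :
    chainMat 2 ^ (n - 1) * chainMat 3 * chainMat 2 ^ (s + 1).toNat * chainMat 1 =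
      !![-((n : ℤ) * s + 3 * n - 1), -(n : ℤ);
         ((n : ℤ) + 1) * s + 3 * n + 2, (n : ℤ) + 1] := by
  have h1 : ((n - 1 : ℕ) : ℤ) = (n : ℤ) - 1 := by
    have := Nat.cast_sub hn (R := ℤ); simpa using this
  have h2 : (((s + 1).toNat : ℤ)) = s + 1 := Int.toNat_of_nonneg (by linarith)
  rw [chainMat_two_pow, chainMat_two_pow, h1, h2, chainMat, chainMat]
  ext i j
  fin_cases i <;> fin_cases j <;>
    simp [Matrix.mul_apply, Fin.sum_univ_succ] <;> ring
end

section
/- Let f(s,k) = (-8s² - 24s + 31)·k + (81s⁴ + 666s³ + 1531s² + 666s + 81). Then the only pairs of positive integers (s, w) with f(s, w²) = 0 are (s, w) = (1, 55) and (s, w) = (2, 17). -/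
set_option maxRecDepth 100000 in
private lemma case_II_aux1 : ∀ n : ℕ, n < 1000 →
    (8*n^2+24*n-31) ∣ 28647703 → n = 1 ∨ n = 2 ∨ n = 5 ∨ n = 9 ∨ n = 16 := by
  decide

set_option maxRecDepth 100000 in
private lemma case_II_aux2 : ∀ n : ℕ, n < 892 →
    ¬ ((8*(n+1000)^2+24*(n+1000)-31) ∣ 28647703) := by
  decide

/-- The only positive integer solutions of
`(-8s² - 24s + 31)·w² + 81s⁴ + 666s³ + 1531s² + 666s + 81 = 0`
are `(s,w) = (1,55)` and `(s,w) = (2,17)`. -/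
theorem case_II_a8_solutions (s w : ℤ) (hs : 0 < s) (hw : 0 < w) :
    (-8 * s ^ 2 - 24 * s + 31) * w ^ 2 +
        (81 * s ^ 4 + 666 * s ^ 3 + 1531 * s ^ 2 + 666 * s + 81) = 0 ↔
      (s, w) = (1, 55) ∨ (s, w) = (2, 17) := by
  constructor
  · intro h
    -- certificate: D ∣ 28647703 = 7³·17⁴
    have hdvd : (8*s^2+24*s-31) ∣ (28647703 : ℤ) :=
      ⟨(3421440*s^3+14431176*s^2+6379608*s-37321) + (339392-337920*s)*w^2, by
        linear_combination (339392 - 337920*s) * h⟩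
    have hle : (8*s^2+24*s-31 : ℤ) ≤ 28647703 := Int.le_of_dvd (by norm_num) hdvd
    have hsle : s ≤ 1891 := by nlinarith
    -- move to ℕ
    set n := s.toNat with hn
    have hns : (n : ℤ) = s := Int.toNat_of_nonneg hs.le
    have hn1 : 1 ≤ n := by omega
    have h31 : 31 ≤ 8*n^2+24*n := by nlinarith
    have hcast : ((8*n^2+24*n-31 : ℕ) : ℤ) = 8*s^2+24*s-31 := by
      rw [Nat.cast_sub h31]
      push_cast [hns]
      ring
    have hdvdn : (8*n^2+24*n-31) ∣ (28647703 : ℕ) := by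
      have : ((8*n^2+24*n-31 : ℕ) : ℤ) ∣ ((28647703 : ℕ) : ℤ) := by
        rw [hcast]; exact_mod_cast hdvd
      exact_mod_cast this
    have hnlt : n < 1892 := by omega
    have hcases : n = 1 ∨ n = 2 ∨ n = 5 ∨ n = 9 ∨ n = 16 := by
      rcases lt_or_ge n 1000 with hlt | hge
      · exact case_II_aux1 n hlt hdvdn
      · exfalso
        have h892 : n - 1000 < 892 := by omega
        have := case_II_aux2 (n - 1000) h892
        apply this
        have : n - 1000 + 1000 = n := by omega
        rw [this]
        exact hdvdn
    have hscases : s = 1 ∨ s = 2 ∨ s = 5 ∨ s = 9 ∨ s = 16 := by omega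
    rcases hscases with rfl | rfl | rfl | rfl | rfl
    · -- s = 1 : w² = 3025, w = 55
      left
      have h2 : (w - 55) * (w + 55) = 0 := by linarith [h, sq_nonneg w]
      have := mul_eq_zero.mp h2
      simp only [Prod.mk.injEq]
      exact ⟨by trivial, by omega⟩
    · -- s = 2 : 49 w² = 14161, w = 17
      right
      have h2 : (w - 17) * (w + 17) = 0 := by linarith
      have := mul_eq_zero.mp h2
      simp only [Prod.mk.injEq]
      exact ⟨by trivial, by omega⟩
    · -- s = 5 : 289 w² = 175561, impossible
      exfalso
      have hk : 289 * w^2 = 175561 := by linarith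
      have : (289 : ℤ) ∣ 175561 := ⟨w^2, by linarith⟩
      norm_num at this
    · -- s = 9 : w² = 1377, impossible
      exfalso
      have hk : 833 * w^2 = 1147041 := by linarith
      have hw2 : w^2 = 1377 := by linarith
      rcases le_or_gt w 37 with h37 | h37
      · nlinarith
      · nlinarith
    · -- s = 16 : 2401 w² = 8439025, impossible
      exfalso
      have : (2401 : ℤ) ∣ 8439025 := ⟨w^2, by linarith⟩
      norm_num at this
  · rintro (h | h) <;> (injection h with h1 h2; subst h1; subst h2; ring)
end

section
/- Let v₀, v₁, v₂, v₃ be four pairwise non-proportional primitive vectors of a complete fan in ℤ² listed counterclockwise (each consecutive angle less than π), with indices taken cyclically. Define the sign of vᵢ as follows: vᵢ is positive if the directed counterclockwise angle from v_{i-1} to v_{i+1} exceeds π, and negative if it is less than π. Assume no vector has sign 0 (i.e. v_{i-1} and v_{i+1} are never anti-parallel). Then opposite vectors (v₀,v₂) and (v₁,v₃) have opposite signs; in particular the cyclic list of signs is a rotation of (+,+,-,-). -/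
/-- The cross product (determinant) of two vectors in `ℤ²`. -/
def cross (a b : ℤ × ℤ) : ℤ := a.1 * b.2 - a.2 * b.1

/-- Signature lemma for complete fans with four rays: if `v 0, v 1, v 2, v 3`
are the rays of a complete fan in `ℤ²` listed counterclockwise (each
consecutive angle in `(0, π)`, encoded by `cross (v i) (v (i+1)) > 0`), define
the sign of `v i` to be `+1` if the counterclockwise angle from `v (i-1)` to
`v (i+1)` exceeds `π` (i.e. `cross (v (i-1)) (v (i+1)) < 0`) and `-1` if it is
less than `π`. If no sign is zero, then opposite rays have opposite signs, and
the cyclic list of signs is a rotation of `(+,+,-,-)`. -/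
theorem fan_signature (v : Fin 4 → ℤ × ℤ)
    (hfan : ∀ i : Fin 4, 0 < cross (v i) (v (i + 1)))
    (hnz : ∀ i : Fin 4, cross (v (i - 1)) (v (i + 1)) ≠ 0)
    (sgn : Fin 4 → ℤ)
    (hsgn : ∀ i : Fin 4, sgn i = -Int.sign (cross (v (i - 1)) (v (i + 1)))) :
    (∀ i : Fin 4, sgn (i + 2) = -sgn i) ∧
    (∃ j : Fin 4, sgn j = 1 ∧ sgn (j + 1) = 1 ∧ sgn (j + 2) = -1 ∧ sgn (j + 3) = -1) := by
  have anti : ∀ a b : ℤ × ℤ, cross a b = -cross b a := by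
    intro a b; simp only [cross]; ring
  have h0 := hsgn 0
  have h1 := hsgn 1
  have h2 := hsgn 2
  have h3 := hsgn 3
  have e0 : (0 : Fin 4) - 1 = 3 := rfl
  have e1 : (0 : Fin 4) + 1 = 1 := rfl
  have e2 : (1 : Fin 4) - 1 = 0 := rfl
  have e3 : (1 : Fin 4) + 1 = 2 := rfl
  have e4 : (2 : Fin 4) - 1 = 1 := rfl
  have e5 : (2 : Fin 4) + 1 = 3 := rfl
  have e6 : (3 : Fin 4) - 1 = 2 := rfl
  have e7 : (3 : Fin 4) + 1 = 0 := rfl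
  rw [e0, e1] at h0; rw [e2, e3] at h1; rw [e4, e5] at h2; rw [e6, e7] at h3
  have hA : cross (v 3) (v 1) ≠ 0 := by have := hnz 0; rwa [e0, e1] at this
  have hB : cross (v 0) (v 2) ≠ 0 := by have := hnz 1; rwa [e2, e3] at this
  have h2' : sgn 2 = -sgn 0 := by
    rw [h2, h0, anti (v 1) (v 3), Int.sign_neg]
  have h3' : sgn 3 = -sgn 1 := by
    rw [h3, h1, anti (v 2) (v 0), Int.sign_neg]
  have hs0 : sgn 0 = 1 ∨ sgn 0 = -1 := by
    rw [h0]
    rcases hA.lt_or_gt with h | h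
    · left; rw [Int.sign_eq_neg_one_iff_neg.mpr h]; decide
    · right; rw [Int.sign_eq_one_iff_pos.mpr h]
  have hs1 : sgn 1 = 1 ∨ sgn 1 = -1 := by
    rw [h1]
    rcases hB.lt_or_gt with h | h
    · left; rw [Int.sign_eq_neg_one_iff_neg.mpr h]; decide
    · right; rw [Int.sign_eq_one_iff_pos.mpr h]
  constructor
  · intro i
    fin_cases i
    · exact h2'
    · exact h3'
    · show sgn 0 = -sgn 2; omega
    · show sgn 1 = -sgn 3; omega
  · rcases hs0 with hs0 | hs0 <;> rcases hs1 with hs1 | hs1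
    · exact ⟨0, hs0, hs1, by show sgn 2 = -1; omega, by show sgn 3 = -1; omega⟩
    · exact ⟨3, by show sgn 3 = 1; omega, hs0, by show sgn 1 = -1; omega,
        by show sgn 2 = -1; omega⟩
    · exact ⟨1, hs1, by show sgn 2 = 1; omega, by show sgn 3 = -1; omega,
        by show sgn 0 = -1; omega⟩
    · exact ⟨2, by show sgn 2 = 1; omega, by show sgn 3 = 1; omega, hs0, hs1⟩
end
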